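/- arXiv:2309.06968 — 2 statements merged into one kernel-verified Lean document; each statement's English description precedes it below -/
import Mathlib

section
/- In a Q-metric space (X,d) with Q a continuous quantale, if y ∈ B(x,δ) with δ ≪ 1, then there exists δ' ≪ 1 such that B(y,δ') ⊆ B(x,δ). -/
/-- `a` is way-below `b`: for every nonempty directed `D` with `b ≤ sSup D`,
some element of `D` dominates `a`. -/
def WayBelow {Q : Type*} [CompleteLattice Q] (a b : Q) : Prop :=
  ∀ D : Set Q, D.Nonempty → DirectedOn (· ≤ ·) D → b ≤ sSup D → ∃ d ∈ D, a ≤ d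

/-- A complete lattice is continuous if every element is the join of the
elements way-below it. -/
def ContinuousLattice (Q : Type*) [CompleteLattice Q] : Prop :=
  ∀ x : Q, x = sSup {y | WayBelow y x}

/-- Open ball in a `Q`-metric space. -/
def ball {Q X : Type*} [CompleteLattice Q] (d : X → X → Q) (x : X) (δ : Q) : Set X :=
  {y | WayBelow δ (d x y)}

/-!
Interpolate `δ ≪ c ≪ d x y`. In a continuous quantale `d x y = d x y * sSup {q | q ≪ 1}` is the
directed join of the elements `d x y * q` with `q ≪ 1`, so `c ≤ d x y * q` for one of them.
For `z ∈ ball d y q` the triangle inequality gives `d x y * q ≤ d x y * d y z ≤ d x z`,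
hence `δ ≪ d x z`.
-/

section WayBelow

variable {Q : Type*} [CompleteLattice Q] {a b c : Q}

theorem WayBelow.le (h : WayBelow a b) : a ≤ b := by
  obtain ⟨e, he, hae⟩ :=
    h {b} (Set.singleton_nonempty b) (directedOn_singleton b) sSup_singleton.ge
  rwa [Set.mem_singleton_iff.mp he] at hae

theorem WayBelow.trans_le (h : WayBelow a b) (hbc : b ≤ c) : WayBelow a c :=
  fun D hne hdir hle => h D hne hdir (hbc.trans hle)

theorem wayBelow_of_le_of_wayBelow (hab : a ≤ b) (h : WayBelow b c) : WayBelow a c := by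
  intro D hne hdir hle
  obtain ⟨e, he, hbe⟩ := h D hne hdir hle
  exact ⟨e, he, hab.trans hbe⟩

theorem wayBelow_bot (b : Q) : WayBelow ⊥ b := by
  rintro D ⟨e, he⟩ - -
  exact ⟨e, he, bot_le⟩

theorem WayBelow.sup (ha : WayBelow a c) (hb : WayBelow b c) : WayBelow (a ⊔ b) c := by
  intro D hne hdir hle
  obtain ⟨e₁, he₁, hae₁⟩ := ha D hne hdir hle
  obtain ⟨e₂, he₂, hbe₂⟩ := hb D hne hdir hle
  obtain ⟨e, he, he₁e, he₂e⟩ := hdir e₁ he₁ e₂ he₂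
  exact ⟨e, he, sup_le (hae₁.trans he₁e) (hbe₂.trans he₂e)⟩

theorem directedOn_wayBelow (b : Q) : DirectedOn (· ≤ ·) {a | WayBelow a b} :=
  fun a ha c hc => ⟨a ⊔ c, ha.sup hc, le_sup_left, le_sup_right⟩

theorem ContinuousLattice.exists_wayBelow_wayBelow (hcont : ContinuousLattice Q)
    (h : WayBelow a b) : ∃ c, WayBelow a c ∧ WayBelow c b := by
  set D : Set Q := {e | ∃ c, WayBelow e c ∧ WayBelow c b}
  have hne : D.Nonempty := ⟨⊥, ⊥, wayBelow_bot ⊥, wayBelow_bot b⟩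
  have hdir : DirectedOn (· ≤ ·) D := by
    rintro e₁ ⟨c₁, he₁, hc₁⟩ e₂ ⟨c₂, he₂, hc₂⟩
    exact ⟨e₁ ⊔ e₂, ⟨c₁ ⊔ c₂, (he₁.trans_le le_sup_left).sup (he₂.trans_le le_sup_right),
      hc₁.sup hc₂⟩, le_sup_left, le_sup_right⟩
  -- `b = ⨆_{c ≪ b} c = ⨆_{c ≪ b} ⨆_{e ≪ c} e`, and every such `e` lies in `D`
  have hle : b ≤ sSup D := by
    rw [hcont b]
    refine sSup_le fun c hc => ?_
    rw [hcont c]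
    exact sSup_le fun e he => le_sSup ⟨c, he, hc⟩
  obtain ⟨e, ⟨c, hec, hcb⟩, hae⟩ := h D hne hdir hle
  exact ⟨c, wayBelow_of_le_of_wayBelow hae hec, hcb⟩

end WayBelow

section Quantale

variable {Q : Type*} [CompleteLattice Q] [Monoid Q] [IsQuantale Q]

theorem ContinuousLattice.exists_wayBelow_one_wayBelow_mul (hcont : ContinuousLattice Q)
    {a b : Q} (h : WayBelow a b) : ∃ q, WayBelow q 1 ∧ WayBelow a (b * q) := by
  obtain ⟨c, hac, hcb⟩ := hcont.exists_wayBelow_wayBelow h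
  set S : Set Q := {q | WayBelow q 1}
  have hdir : DirectedOn (· ≤ ·) ((b * ·) '' S) :=
    directedOn_image.2 ((directedOn_wayBelow 1).mono fun _ _ h => mul_le_mul_right h b)
  have hb : b = sSup ((b * ·) '' S) := by
    rw [sSup_image, ← mul_sSup_distrib, ← hcont 1, mul_one]
  obtain ⟨-, ⟨q, hq, rfl⟩, hc⟩ :=
    hcb _ ((Set.nonempty_of_mem (wayBelow_bot 1)).image _) hdir hb.le
  exact ⟨q, hq, hac.trans_le hc⟩

end Quantale

theorem ball_mem_nhds_general {Q X : Type*} [CompleteLattice Q] [Monoid Q] [IsQuantale Q]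
    (hcont : ContinuousLattice Q) (d : X → X → Q)
    (htri : ∀ x y z : X, d x y * d y z ≤ d x z)
    (x y : X) (δ : Q) (hy : y ∈ ball d x δ) :
    ∃ δ' : Q, WayBelow δ' 1 ∧ ball d y δ' ⊆ ball d x δ := by
  obtain ⟨q, hq, hδq⟩ := hcont.exists_wayBelow_one_wayBelow_mul hy
  refine ⟨q, hq, fun z hz => hδq.trans_le ?_⟩
  calc d x y * q ≤ d x y * d y z := mul_le_mul_right hz.le _
    _ ≤ d x z := htri x y z

theorem ball_mem_nhds {Q X : Type*} [CompleteLattice Q] [Monoid Q] [IsQuantale Q]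
    (hcont : ContinuousLattice Q) (d : X → X → Q)
    (hrefl : ∀ x : X, 1 ≤ d x x) (htri : ∀ x y z : X, d x y * d y z ≤ d x z)
    (x y : X) (δ : Q) (hδ : WayBelow δ 1) (hy : y ∈ ball d x δ) :
    ∃ δ' : Q, WayBelow δ' 1 ∧ ball d y δ' ⊆ ball d x δ :=
  ball_mem_nhds_general hcont d htri x y δ hy
end

section
/- For a Q-metric space (X,d) with Q continuous and A ⊆ X, the closure of A in the open ball topology τ_d equals {y ∈ X : ∀δ ≪ 1, ∃x ∈ A, δ ≪ d(y,x)}. -/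
/-!
Every point `y` of a ball `B(x, δ)` is the centre of a smaller ball `B(y, ε) ⊆ B(x, δ)`
with `ε ≪ 1`: interpolate `δ ≪ δ' ≪ d(x, y)`, and use `d(x, y) = d(x, y) ⊗ ⋁{ε | ε ≪ 1}` together
with `δ' ≪ d(x, y)` to find `ε ≪ 1` with `δ' ≤ d(x, y) ⊗ ε ≤ d(x, y) ⊗ d(y, z) ≤ d(x, z)` for all
`z ∈ B(y, ε)`. Hence the balls form a basis of `τ_d`, and `y` lies in the closure of `A` iff every
ball `B(y, δ)` meets `A`.
-/

open TopologicalSpace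

namespace WayBelow

variable {Q : Type*} [CompleteLattice Q] {a a' b b' c : Q}

theorem bot_left (b : Q) : WayBelow ⊥ b :=
  fun _ hD _ _ => hD.imp fun _ hd => ⟨hd, bot_le⟩

theorem mono_left (h : a' ≤ a) (hab : WayBelow a b) : WayBelow a' b :=
  fun D hD hdir hle => (hab D hD hdir hle).imp fun _ hd => ⟨hd.1, h.trans hd.2⟩

theorem mono_right (hab : WayBelow a b) (h : b ≤ b') : WayBelow a b' :=
  fun D hD hdir hle => hab D hD hdir (h.trans hle)

theorem le_s9 (h : WayBelow a b) : a ≤ b := by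
  obtain ⟨_, rfl, hb⟩ := h {b} (Set.singleton_nonempty b) (directedOn_singleton b)
    sSup_singleton.ge
  exact hb

theorem sup_left (ha : WayBelow a c) (hb : WayBelow b c) : WayBelow (a ⊔ b) c := by
  intro D hD hdir hle
  obtain ⟨d₁, hd₁, had₁⟩ := ha D hD hdir hle
  obtain ⟨d₂, hd₂, hbd₂⟩ := hb D hD hdir hle
  obtain ⟨e, he, hd₁e, hd₂e⟩ := hdir d₁ hd₁ d₂ hd₂
  exact ⟨e, he, sup_le (had₁.trans hd₁e) (hbd₂.trans hd₂e)⟩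

end WayBelow

namespace ContinuousLattice

variable {Q : Type*} [CompleteLattice Q]

theorem exists_wayBelow_wayBelow_s9 (hcont : ContinuousLattice Q) {a b : Q} (h : WayBelow a b) :
    ∃ c, WayBelow a c ∧ WayBelow c b := by
  let D : Set Q := {u | ∃ v, WayBelow u v ∧ WayBelow v b}
  have hD : D.Nonempty := ⟨⊥, ⊥, WayBelow.bot_left _, WayBelow.bot_left _⟩
  have hdir : DirectedOn (· ≤ ·) D := by
    rintro u₁ ⟨v₁, hu₁, hv₁⟩ u₂ ⟨v₂, hu₂, hv₂⟩
    exact ⟨u₁ ⊔ u₂, ⟨v₁ ⊔ v₂, (hu₁.mono_right le_sup_left).sup_left (hu₂.mono_right le_sup_right),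
      hv₁.sup_left hv₂⟩, le_sup_left, le_sup_right⟩
  -- continuity at `b` and at each `v ≪ b` gives `b = ⋁{u | u ≪ v ≪ b}`
  have hle : b ≤ sSup D := by
    rw [hcont b]
    refine sSup_le fun v hv => ?_
    rw [hcont v]
    exact sSup_le fun u hu => le_sSup ⟨v, hu, hv⟩
  obtain ⟨u, ⟨v, huv, hvb⟩, hau⟩ := h D hD hdir hle
  exact ⟨v, huv.mono_left hau, hvb⟩

theorem exists_wayBelow_one_le_mul [Monoid Q] [IsQuantale Q] (hcont : ContinuousLattice Q)
    {δ c : Q} (h : WayBelow δ c) : ∃ ε, WayBelow ε 1 ∧ δ ≤ c * ε := by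
  let S : Set Q := (c * ·) '' {ε | WayBelow ε 1}
  have hS : S.Nonempty := ⟨c * ⊥, ⊥, WayBelow.bot_left _, rfl⟩
  have hdir : DirectedOn (· ≤ ·) S := by
    rintro _ ⟨ε₁, hε₁, rfl⟩ _ ⟨ε₂, hε₂, rfl⟩
    exact ⟨c * (ε₁ ⊔ ε₂), ⟨ε₁ ⊔ ε₂, hε₁.sup_left hε₂, rfl⟩,
      mul_le_mul_right le_sup_left c, mul_le_mul_right le_sup_right c⟩
  have hle : c ≤ sSup S :=
    le_of_eq <| by rw [sSup_image, ← mul_sSup_distrib, ← hcont 1, mul_one]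
  obtain ⟨_, ⟨ε, hε, rfl⟩, hδ⟩ := h S hS hdir hle
  exact ⟨ε, hε, hδ⟩

end ContinuousLattice

section QMetric

variable {Q X : Type*} [CompleteLattice Q] (d : X → X → Q)

def balls [One Q] : Set (Set X) := {s | ∃ (x : X) (δ : Q), WayBelow δ 1 ∧ s = ball d x δ}

variable {d}

theorem ball_subset_ball {x : X} {δ ε : Q} (h : δ ≤ ε) : ball d x ε ⊆ ball d x δ :=
  fun _ hy => WayBelow.mono_left h hy

theorem mem_ball_self [One Q] (hrefl : ∀ x : X, 1 ≤ d x x) {x : X} {δ : Q} (hδ : WayBelow δ 1) :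
    x ∈ ball d x δ :=
  hδ.mono_right (hrefl x)

theorem exists_ball_subset_ball [Monoid Q] [IsQuantale Q] (hcont : ContinuousLattice Q)
    (htri : ∀ x y z : X, d x y * d y z ≤ d x z) {x y : X} {δ : Q} (hy : y ∈ ball d x δ) :
    ∃ ε, WayBelow ε 1 ∧ ball d y ε ⊆ ball d x δ := by
  obtain ⟨δ', hδδ', hδ'⟩ := hcont.exists_wayBelow_wayBelow_s9 hy
  obtain ⟨ε, hε, hδ'le⟩ := hcont.exists_wayBelow_one_le_mul hδ'
  refine ⟨ε, hε, fun z hz => hδδ'.mono_right ?_⟩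
  calc δ' ≤ d x y * ε := hδ'le
    _ ≤ d x y * d y z := mul_le_mul_right hz.le_s9 _
    _ ≤ d x z := htri x y z

theorem isTopologicalBasis_balls [Monoid Q] [IsQuantale Q] (hcont : ContinuousLattice Q)
    (hrefl : ∀ x : X, 1 ≤ d x x) (htri : ∀ x y z : X, d x y * d y z ≤ d x z) :
    @IsTopologicalBasis X (generateFrom (balls d)) (balls d) := by
  let _ : TopologicalSpace X := generateFrom (balls d)
  refine ⟨?_, ?_, rfl⟩
  · rintro _ ⟨x₁, δ₁, -, rfl⟩ _ ⟨x₂, δ₂, -, rfl⟩ y ⟨hy₁, hy₂⟩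
    obtain ⟨ε₁, hε₁, hsub₁⟩ := exists_ball_subset_ball hcont htri hy₁
    obtain ⟨ε₂, hε₂, hsub₂⟩ := exists_ball_subset_ball hcont htri hy₂
    have hε : WayBelow (ε₁ ⊔ ε₂) 1 := hε₁.sup_left hε₂
    exact ⟨ball d y (ε₁ ⊔ ε₂), ⟨y, _, hε, rfl⟩, mem_ball_self hrefl hε,
      Set.subset_inter ((ball_subset_ball le_sup_left).trans hsub₁)
        ((ball_subset_ball le_sup_right).trans hsub₂)⟩
  · exact Set.eq_univ_of_forall fun x =>
      ⟨ball d x ⊥, ⟨x, ⊥, WayBelow.bot_left 1, rfl⟩, WayBelow.bot_left _⟩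

end QMetric

theorem closure_eq {Q X : Type*} [CompleteLattice Q] [Monoid Q] [IsQuantale Q]
    (hcont : ContinuousLattice Q) (d : X → X → Q)
    (hrefl : ∀ x : X, 1 ≤ d x x) (htri : ∀ x y z : X, d x y * d y z ≤ d x z)
    (A : Set X) :
    @closure X (TopologicalSpace.generateFrom
        {s | ∃ (x : X) (δ : Q), WayBelow δ 1 ∧ s = ball d x δ}) A =
      {y : X | ∀ δ : Q, WayBelow δ 1 → ∃ x ∈ A, WayBelow δ (d y x)} := by
  refine Set.ext fun y =>
    (@IsTopologicalBasis.mem_closure_iff X (generateFrom (balls d)) _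
      (isTopologicalBasis_balls hcont hrefl htri) A y).trans ⟨?_, ?_⟩
  · intro h δ hδ
    obtain ⟨a, hya, ha⟩ := h _ ⟨y, δ, hδ, rfl⟩ (mem_ball_self hrefl hδ)
    exact ⟨a, ha, hya⟩
  · rintro h _ ⟨x, δ, -, rfl⟩ hy
    obtain ⟨ε, hε, hsub⟩ := exists_ball_subset_ball hcont htri hy
    obtain ⟨a, ha, hya⟩ := h ε hε
    exact ⟨a, hsub hya, ha⟩
end
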